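/- arXiv:2003.04415 — 2 statements merged into one kernel-verified Lean document; each statement's English description precedes it below -/
import Mathlib

section
/- Let U ⊂ ℝ² be open, bounded, convex with x₀ ∈ U and diameter δ, and let B ∈ C¹(ℝ²). For every s ∈ (0,1), s² ∫_U |B(s(x−x₀)+x₀) − B_av|² dx ≤ 8 δ² ∫_U |∇B|² dx, where B_av = (1/|U|) ∫_U B dy. -/
/-! For `a ∈ U`, Jensen's inequality and the fundamental theorem of calculus along segments give
`(B a - B_av)² ≤ |U|⁻¹ δ² ∫_U ∫₀¹ |∇B(a + t (y - a))|² dt dy`. Take `a = x₀ + s (x - x₀)` and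
integrate over `x ∈ U`. For fixed `t`, the point `(1 - t) a + t y` is an affine image of `y` with
ratio `t` and of `x` with ratio `(1 - t) s`, and one of these ratios is at least `s / 2`; changing
variables in that one bounds the double integral over `(x, y)` by `(2 / s)ⁿ |U| ∫_U |∇B|²`. Hence
`sⁿ ∫_U |B(x₀ + s (x - x₀)) - B_av|² ≤ 2ⁿ δ² ∫_U |∇B|²`, and in the plane `2² ≤ 8`. -/

open MeasureTheory Set Filter Module

theorem sq_setAverage_le_setAverage_sq {α : Type*} [MeasurableSpace α] {μ : Measure α}
    {s : Set α} {f : α → ℝ} (h0 : μ s ≠ 0) (hs : μ s ≠ ⊤) (hf : IntegrableOn f s μ)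
    (hf2 : IntegrableOn (fun x ↦ f x ^ 2) s μ) :
    (⨍ x in s, f x ∂μ) ^ 2 ≤ ⨍ x in s, f x ^ 2 ∂μ :=
  even_two.convexOn_pow.map_set_average_le (continuous_pow 2).continuousOn isClosed_univ h0 hs
    (Eventually.of_forall fun _ ↦ mem_univ _) hf hf2

theorem IsCompact.integrable_comp_of_ae_mem {X Y : Type*} [TopologicalSpace X]
    [MeasurableSpace X] [OpensMeasurableSpace X] [TopologicalSpace Y] {ν : Measure X}
    [IsFiniteMeasure ν] {K : Set Y} (hK : IsCompact K) {f : Y → ℝ} (hf : Continuous f)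
    {F : X → Y} (hF : Continuous F) (hFK : ∀ᵐ p ∂ν, F p ∈ K) :
    Integrable (fun p ↦ f (F p)) ν := by
  obtain ⟨C, hC⟩ := hK.exists_bound_of_continuousOn hf.continuousOn
  exact (integrable_const C).mono' (hf.comp hF).aestronglyMeasurable (hFK.mono fun p hp ↦ hC _ hp)

theorem integral_integral_integral_comm {α β γ G : Type*} [MeasurableSpace α]
    [MeasurableSpace β] [MeasurableSpace γ] [NormedAddCommGroup G] [NormedSpace ℝ G]
    {μ : Measure α} {ν : Measure β} {ρ : Measure γ} [SFinite μ] [SFinite ν] [SFinite ρ]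
    {f : α → β → γ → G}
    (hf : Integrable (fun p : (α × β) × γ ↦ f p.1.1 p.1.2 p.2) ((μ.prod ν).prod ρ)) :
    ∫ x, ∫ y, ∫ z, f x y z ∂ρ ∂ν ∂μ = ∫ z, ∫ x, ∫ y, f x y z ∂ν ∂μ ∂ρ := by
  calc ∫ x, ∫ y, ∫ z, f x y z ∂ρ ∂ν ∂μ = ∫ p, ∫ z, f p.1 p.2 z ∂ρ ∂(μ.prod ν) :=
        integral_integral (f := fun x y ↦ ∫ z, f x y z ∂ρ) hf.integral_prod_left
    _ = ∫ z, ∫ p, f p.1 p.2 z ∂(μ.prod ν) ∂ρ :=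
        integral_integral_swap (f := fun (p : α × β) z ↦ f p.1 p.2 z) hf
    _ = ∫ z, ∫ x, ∫ y, f x y z ∂ν ∂μ ∂ρ :=
        integral_congr_ae <| hf.prod_left_ae.mono fun z hz ↦
          (integral_integral (f := fun x y ↦ f x y z) hz).symm

theorem setIntegral_le_mul_measureReal_of_forall_le {α : Type*} [MeasurableSpace α]
    {μ : Measure α} {s : Set α} {F : α → ℝ} {C : ℝ} (hs : μ s < ⊤) (hF : ∀ x ∈ s, 0 ≤ F x)
    (hFC : ∀ x ∈ s, F x ≤ C) : ∫ x in s, F x ∂μ ≤ C * μ.real s :=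
  (le_abs_self _).trans <| norm_setIntegral_le_of_norm_le_const hs fun x hx ↦ by
    rw [Real.norm_of_nonneg (hF x hx)]; exact hFC x hx

theorem Convex.mapsTo_homothety {V : Type*} [AddCommGroup V] [Module ℝ V] {U : Set V}
    (hU : Convex ℝ U) {x₀ : V} (hx₀ : x₀ ∈ U) {s : ℝ} (hs : s ∈ Icc (0 : ℝ) 1) :
    MapsTo (AffineMap.homothety x₀ s) U U := fun x hx ↦ by
  rw [AffineMap.homothety_apply, vsub_eq_sub, vadd_eq_add, add_comm]
  exact hU.add_smul_sub_mem hx₀ hx hs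

section NormedSpace

variable {E : Type*} [NormedAddCommGroup E] [NormedSpace ℝ E]

theorem sq_sub_le_norm_sq_mul_integral_norm_fderiv_sq {B : E → ℝ} (hB : ContDiff ℝ 1 B)
    (a b : E) :
    (B b - B a) ^ 2 ≤ ‖b - a‖ ^ 2 * ∫ t in Ioc (0 : ℝ) 1, ‖fderiv ℝ B (a + t • (b - a))‖ ^ 2 := by
  set D : ℝ → ℝ := fun t ↦ fderiv ℝ B (a + t • (b - a)) (b - a)
  have hB' : Continuous fun t : ℝ ↦ fderiv ℝ B (a + t • (b - a)) :=
    (hB.continuous_fderiv one_ne_zero).comp (by fun_prop)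
  have hD : Continuous D := hB'.clm_apply continuous_const
  have hderiv (t : ℝ) : HasDerivAt (fun t : ℝ ↦ B (a + t • (b - a))) (D t) t := by
    have hline : HasDerivAt (fun t : ℝ ↦ a + t • (b - a)) (b - a) t := by
      simpa using ((hasDerivAt_id t).smul_const (b - a)).const_add a
    exact (hB.differentiable one_ne_zero _).hasFDerivAt.comp_hasDerivAt t hline
  have hftc : B b - B a = ∫ t in Ioc (0 : ℝ) 1, D t := by
    rw [← intervalIntegral.integral_of_le zero_le_one,
      intervalIntegral.integral_eq_sub_of_hasDerivAt (fun t _ ↦ hderiv t)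
        (hD.intervalIntegrable 0 1)]
    simp
  have hjensen : (∫ t in Ioc (0 : ℝ) 1, D t) ^ 2 ≤ ∫ t in Ioc (0 : ℝ) 1, D t ^ 2 := by
    simpa [setAverage_eq] using sq_setAverage_le_setAverage_sq (μ := volume) (s := Ioc (0 : ℝ) 1)
      (by simp) (by simp) hD.integrableOn_Ioc (hD.pow 2).integrableOn_Ioc
  have hpointwise (t : ℝ) : D t ^ 2 ≤ ‖b - a‖ ^ 2 * ‖fderiv ℝ B (a + t • (b - a))‖ ^ 2 := by
    rw [← sq_abs, ← mul_pow, mul_comm]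
    exact pow_le_pow_left₀ (abs_nonneg _) ((fderiv ℝ B _).le_opNorm _) 2
  calc (B b - B a) ^ 2 ≤ ∫ t in Ioc (0 : ℝ) 1, D t ^ 2 := hftc ▸ hjensen
    _ ≤ ∫ t in Ioc (0 : ℝ) 1, ‖b - a‖ ^ 2 * ‖fderiv ℝ B (a + t • (b - a))‖ ^ 2 :=
      integral_mono (hD.pow 2).integrableOn_Ioc.integrable
        (continuous_const.mul (hB'.norm.pow 2)).integrableOn_Ioc.integrable hpointwise
    _ = _ := integral_const_mul _ _

variable [FiniteDimensional ℝ E] [MeasurableSpace E] [BorelSpace E] (μ : Measure E)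
  [μ.IsAddHaarMeasure]

theorem pow_finrank_mul_setIntegral_comp_smul_add_le {g : E → ℝ} (hg : 0 ≤ g) {U W : Set E}
    (hU : MeasurableSet U) (hW : IntegrableOn g W μ) {c : ℝ} (hc : 0 < c) (v : E)
    (hUW : MapsTo (fun x ↦ c • x + v) U W) :
    c ^ finrank ℝ E * ∫ x in U, g (c • x + v) ∂μ ≤ ∫ z in W, g z ∂μ := by
  have hderiv (x : E) :
      HasFDerivWithinAt (fun x ↦ c • x + v) (c • ContinuousLinearMap.id ℝ E) U x :=
    (((hasFDerivAt_id x).const_smul c).add_const v).hasFDerivWithinAt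
  have hinj : InjOn (fun x ↦ c • x + v) U := fun x _ y _ hxy ↦
    smul_right_injective E hc.ne' (add_right_cancel hxy)
  have hdet : |(c • ContinuousLinearMap.id ℝ E).det| = c ^ finrank ℝ E := by
    simp [ContinuousLinearMap.det, LinearMap.det_smul, abs_of_pos hc]
  have hcov := integral_image_eq_integral_abs_det_fderiv_smul μ hU (fun x _ ↦ hderiv x) hinj g
  rw [hdet, integral_smul, smul_eq_mul] at hcov
  rw [← hcov]
  exact setIntegral_mono_set hW (Eventually.of_forall hg) hUW.image_subset.eventuallyLE

theorem sq_sub_setAverage_le {U : Set E} (hUm : MeasurableSet U)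
    (hU_bdd : Bornology.IsBounded U) (hU_conv : Convex ℝ U) (hU0 : μ U ≠ 0) {B : E → ℝ}
    (hB : ContDiff ℝ 1 B) {a : E} (ha : a ∈ U) :
    (B a - ⨍ y in U, B y ∂μ) ^ 2 ≤ (μ.real U)⁻¹ * (Metric.diam U ^ 2 *
      ∫ y in U, (∫ t in Ioc (0 : ℝ) 1, ‖fderiv ℝ B (a + t • (y - a))‖ ^ 2) ∂μ) := by
  have hμU : μ U ≠ ⊤ := hU_bdd.measure_lt_top.ne
  have : IsFiniteMeasure (μ.restrict U) := isFiniteMeasure_restrict.mpr hμU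
  have hK := hU_bdd.isCompact_closure
  have hBc := hB.continuous
  have hBint : IntegrableOn B U μ :=
    (hBc.continuousOn.integrableOn_compact hK).mono_set subset_closure
  have hsq_int : IntegrableOn (fun y ↦ (B a - B y) ^ 2) U μ :=
    ((continuous_const.sub hBc).pow 2 |>.continuousOn.integrableOn_compact hK).mono_set
      subset_closure
  have hsegment_int : Integrable
      (fun p : E × ℝ ↦ ‖fderiv ℝ B (a + p.2 • (p.1 - a))‖ ^ 2)
      ((μ.restrict U).prod (volume.restrict (Ioc (0 : ℝ) 1))) := by
    refine hK.integrable_comp_of_ae_mem ((hB.continuous_fderiv one_ne_zero).norm.pow 2)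
      (by fun_prop) ?_
    rw [Measure.prod_restrict]
    exact ae_restrict_of_forall_mem (hUm.prod measurableSet_Ioc) fun p hp ↦
      subset_closure (hU_conv.add_smul_sub_mem ha hp.1 (Ioc_subset_Icc_self hp.2))
  have havg : B a - ⨍ y in U, B y ∂μ = ⨍ y in U, (B a - B y) ∂μ := by
    rw [setAverage_eq, setAverage_eq, integral_sub (integrable_const (B a)) hBint,
      setIntegral_const, smul_sub, smul_smul, inv_mul_cancel₀ (by simp [measureReal_def,
        ENNReal.toReal_eq_zero_iff, hU0, hμU]), one_smul]
  calc (B a - ⨍ y in U, B y ∂μ) ^ 2 ≤ ⨍ y in U, (B a - B y) ^ 2 ∂μ :=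
        havg ▸ sq_setAverage_le_setAverage_sq hU0 hμU ((integrable_const (B a)).sub hBint)
          hsq_int
    _ = (μ.real U)⁻¹ * ∫ y in U, (B a - B y) ^ 2 ∂μ := setAverage_eq μ _ U
    _ ≤ (μ.real U)⁻¹ * ∫ y in U, Metric.diam U ^ 2 *
          (∫ t in Ioc (0 : ℝ) 1, ‖fderiv ℝ B (a + t • (y - a))‖ ^ 2) ∂μ := by
      refine mul_le_mul_of_nonneg_left (setIntegral_mono_on hsq_int
        (hsegment_int.integral_prod_left.const_mul _) hUm fun y hy ↦ ?_) (by positivity)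
      rw [← neg_sub, neg_sq]
      refine (sq_sub_le_norm_sq_mul_integral_norm_fderiv_sq hB a y).trans ?_
      gcongr
      exact dist_eq_norm y a ▸ Metric.dist_le_diam_of_mem hU_bdd hy ha
    _ = _ := by rw [integral_const_mul]

theorem half_pow_finrank_mul_integral_integral_segment_homothety_le {g : E → ℝ} (hg : 0 ≤ g)
    (hgc : Continuous g) {U : Set E} (hUm : MeasurableSet U) (hU_bdd : Bornology.IsBounded U)
    (hU_conv : Convex ℝ U) {x₀ : E} (hx₀ : x₀ ∈ U) {s : ℝ} (hs : s ∈ Ioc (0 : ℝ) 1) {t : ℝ}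
    (ht : t ∈ Ioc (0 : ℝ) 1) :
    (s / 2) ^ finrank ℝ E * ∫ x in U, (∫ y in U,
        g (AffineMap.homothety x₀ s x + t • (y - AffineMap.homothety x₀ s x)) ∂μ) ∂μ ≤
      (∫ z in U, g z ∂μ) * μ.real U := by
  obtain ⟨hs0, hs1⟩ := hs
  obtain ⟨ht0, ht1⟩ := ht
  set φ := AffineMap.homothety x₀ s
  have hφ (x : E) : φ x = s • (x - x₀) + x₀ := AffineMap.homothety_apply x₀ s x
  have hmem {x y : E} (hx : x ∈ U) (hy : y ∈ U) : φ x + t • (y - φ x) ∈ U :=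
    hU_conv.add_smul_sub_mem (hU_conv.mapsTo_homothety hx₀ ⟨hs0.le, hs1⟩ hx) hy ⟨ht0.le, ht1⟩
  have hμU : μ U < ⊤ := hU_bdd.measure_lt_top
  have : IsFiniteMeasure (μ.restrict U) := isFiniteMeasure_restrict.mpr hμU.ne
  have hgU : IntegrableOn g U μ :=
    (hgc.continuousOn.integrableOn_compact hU_bdd.isCompact_closure).mono_set subset_closure
  have hrescale {c : ℝ} (hc : s / 2 ≤ c) (v : E) (hv : MapsTo (fun x ↦ c • x + v) U U) :
      (s / 2) ^ finrank ℝ E * ∫ x in U, g (c • x + v) ∂μ ≤ ∫ z in U, g z ∂μ := by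
    refine le_trans ?_ (pow_finrank_mul_setIntegral_comp_smul_add_le μ hg hUm hgU
      ((half_pos hs0).trans_le hc) v hv)
    gcongr
    exact setIntegral_nonneg hUm fun _ _ ↦ hg _
  have hinner_nonneg (F : E → E) : 0 ≤ ∫ x in U, g (F x) ∂μ :=
    setIntegral_nonneg hUm fun _ _ ↦ hg _
  rcases le_or_gt t (1 / 2) with ht2 | ht2
  · have hint : Integrable (fun p : E × E ↦ g (φ p.1 + t • (p.2 - φ p.1)))
        ((μ.restrict U).prod (μ.restrict U)) := by
      refine hU_bdd.isCompact_closure.integrable_comp_of_ae_mem hgc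
        (by have := AffineMap.homothety_continuous x₀ s; fun_prop) ?_
      rw [Measure.prod_restrict]
      exact ae_restrict_of_forall_mem (hUm.prod hUm) fun p hp ↦ subset_closure (hmem hp.1 hp.2)
    rw [integral_integral_swap (f := fun x y ↦ g (φ x + t • (y - φ x))) hint,
      ← integral_const_mul]
    refine setIntegral_le_mul_measureReal_of_forall_le hμU
      (fun y _ ↦ mul_nonneg (by positivity) (hinner_nonneg _)) fun y hy ↦ ?_
    have hv (x : E) : ((1 - t) * s) • x + ((1 - t) • (x₀ - s • x₀) + t • y) =
        φ x + t • (y - φ x) := by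
      rw [hφ]; module
    have key := hrescale (c := (1 - t) * s) (by nlinarith)
      ((1 - t) • (x₀ - s • x₀) + t • y) fun x hx ↦ by
      simp only [hv]; exact hmem hx hy
    simp only [hv] at key
    exact key
  · rw [← integral_const_mul]
    refine setIntegral_le_mul_measureReal_of_forall_le hμU
      (fun x _ ↦ mul_nonneg (by positivity) (hinner_nonneg _)) fun x hx ↦ ?_
    have hv (y : E) : t • y + (1 - t) • φ x = φ x + t • (y - φ x) := by module
    have key := hrescale (c := t) (by linarith) ((1 - t) • φ x) fun y hy ↦ by
      simp only [hv]; exact hmem hx hy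
    simp only [hv] at key
    exact key

theorem integrable_comp_segment_homothety {g : E → ℝ} (hgc : Continuous g) {U : Set E}
    (hUm : MeasurableSet U) (hU_bdd : Bornology.IsBounded U) (hU_conv : Convex ℝ U) {x₀ : E}
    (hx₀ : x₀ ∈ U) {s : ℝ} (hs : s ∈ Icc (0 : ℝ) 1) :
    Integrable (fun p : (E × E) × ℝ ↦
        g (AffineMap.homothety x₀ s p.1.1 + p.2 • (p.1.2 - AffineMap.homothety x₀ s p.1.1)))
      (((μ.restrict U).prod (μ.restrict U)).prod (volume.restrict (Ioc (0 : ℝ) 1))) := by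
  have : IsFiniteMeasure (μ.restrict U) := isFiniteMeasure_restrict.mpr hU_bdd.measure_lt_top.ne
  refine hU_bdd.isCompact_closure.integrable_comp_of_ae_mem hgc
    (by have := AffineMap.homothety_continuous x₀ s; fun_prop) ?_
  rw [Measure.prod_restrict, Measure.prod_restrict]
  exact ae_restrict_of_forall_mem ((hUm.prod hUm).prod measurableSet_Ioc) fun p hp ↦
    subset_closure (hU_conv.add_smul_sub_mem (hU_conv.mapsTo_homothety hx₀ hs hp.1.1) hp.1.2
      (Ioc_subset_Icc_self hp.2))

theorem pow_finrank_mul_integral_integral_integral_segment_homothety_le {g : E → ℝ}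
    (hg : 0 ≤ g) (hgc : Continuous g) {U : Set E} (hUm : MeasurableSet U)
    (hU_bdd : Bornology.IsBounded U) (hU_conv : Convex ℝ U) {x₀ : E} (hx₀ : x₀ ∈ U) {s : ℝ}
    (hs : s ∈ Ioc (0 : ℝ) 1) :
    s ^ finrank ℝ E * ∫ x in U, (∫ y in U, (∫ t in Ioc (0 : ℝ) 1,
        g (AffineMap.homothety x₀ s x + t • (y - AffineMap.homothety x₀ s x))) ∂μ) ∂μ ≤
      2 ^ finrank ℝ E * ((∫ z in U, g z ∂μ) * μ.real U) := by
  set φ := AffineMap.homothety x₀ s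
  rw [integral_integral_integral_comm (integrable_comp_segment_homothety μ hgc hUm hU_bdd hU_conv
    hx₀ (Ioc_subset_Icc_self hs))]
  calc s ^ finrank ℝ E * ∫ t in Ioc (0 : ℝ) 1,
        (∫ x in U, (∫ y in U, g (φ x + t • (y - φ x)) ∂μ) ∂μ)
      = 2 ^ finrank ℝ E * ∫ t in Ioc (0 : ℝ) 1,
        (s / 2) ^ finrank ℝ E * ∫ x in U, (∫ y in U, g (φ x + t • (y - φ x)) ∂μ) ∂μ := by
        rw [integral_const_mul, div_pow, ← mul_assoc, mul_div_cancel₀ _ (by positivity)]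
    _ ≤ 2 ^ finrank ℝ E * ((∫ z in U, g z ∂μ) * μ.real U * volume.real (Ioc (0 : ℝ) 1)) := by
        gcongr
        refine setIntegral_le_mul_measureReal_of_forall_le measure_Ioc_lt_top
          (fun t _ ↦ mul_nonneg (pow_nonneg (half_pos hs.1).le _)
            (setIntegral_nonneg hUm fun x _ ↦ setIntegral_nonneg hUm fun y _ ↦ hg _))
          fun t ht ↦ ?_
        exact half_pow_finrank_mul_integral_integral_segment_homothety_le μ hg hgc hUm hU_bdd
          hU_conv hx₀ hs ht
    _ = 2 ^ finrank ℝ E * ((∫ z in U, g z ∂μ) * μ.real U) := by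
        rw [Real.volume_real_Ioc_of_le zero_le_one, sub_zero, mul_one]

theorem pow_finrank_mul_setIntegral_sq_sub_setAverage_comp_homothety_le {U : Set E}
    (hU_open : IsOpen U) (hU_bdd : Bornology.IsBounded U) (hU_conv : Convex ℝ U) {x₀ : E}
    (hx₀ : x₀ ∈ U) {B : E → ℝ} (hB : ContDiff ℝ 1 B) {s : ℝ} (hs : s ∈ Ioc (0 : ℝ) 1) :
    s ^ finrank ℝ E * ∫ x in U, (B (AffineMap.homothety x₀ s x) - ⨍ y in U, B y ∂μ) ^ 2 ∂μ ≤
      2 ^ finrank ℝ E * Metric.diam U ^ 2 * ∫ x in U, ‖fderiv ℝ B x‖ ^ 2 ∂μ := by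
  set φ := AffineMap.homothety x₀ s
  set g : E → ℝ := fun z ↦ ‖fderiv ℝ B z‖ ^ 2
  have hgc : Continuous g := (hB.continuous_fderiv one_ne_zero).norm.pow 2
  have hUm := hU_open.measurableSet
  have hμU : μ U < ⊤ := hU_bdd.measure_lt_top
  have hU0 : μ U ≠ 0 := (hU_open.measure_pos μ ⟨x₀, hx₀⟩).ne'
  have hm : μ.real U ≠ 0 := (ENNReal.toReal_pos hU0 hμU.ne).ne'
  have hφU : MapsTo φ U U := hU_conv.mapsTo_homothety hx₀ (Ioc_subset_Icc_self hs)
  have hK := hU_bdd.isCompact_closure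
  have hsq_int : IntegrableOn (fun x ↦ (B (φ x) - ⨍ y in U, B y ∂μ) ^ 2) U μ :=
    (((hB.continuous.comp (AffineMap.homothety_continuous x₀ s)).sub continuous_const).pow 2
      |>.continuousOn.integrableOn_compact hK).mono_set subset_closure
  have hK_int := (integrable_comp_segment_homothety μ hgc hUm hU_bdd hU_conv hx₀
    (Ioc_subset_Icc_self hs)).integral_prod_left.integral_prod_left
  calc s ^ finrank ℝ E * ∫ x in U, (B (φ x) - ⨍ y in U, B y ∂μ) ^ 2 ∂μ
      ≤ s ^ finrank ℝ E * ∫ x in U, (μ.real U)⁻¹ * (Metric.diam U ^ 2 *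
          ∫ y in U, (∫ t in Ioc (0 : ℝ) 1, g (φ x + t • (y - φ x))) ∂μ) ∂μ := by
        refine mul_le_mul_of_nonneg_left (setIntegral_mono_on hsq_int
          ((hK_int.const_mul _).const_mul _) hUm
          fun x hx ↦ sq_sub_setAverage_le μ hUm hU_bdd hU_conv hU0 hB (hφU hx))
          (pow_nonneg hs.1.le _)
    _ = (μ.real U)⁻¹ * Metric.diam U ^ 2 * (s ^ finrank ℝ E * ∫ x in U,
          (∫ y in U, (∫ t in Ioc (0 : ℝ) 1, g (φ x + t • (y - φ x))) ∂μ) ∂μ) := by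
        rw [integral_const_mul, integral_const_mul]
        ring
    _ ≤ (μ.real U)⁻¹ * Metric.diam U ^ 2 * (2 ^ finrank ℝ E * ((∫ z in U, g z ∂μ) * μ.real U)) := by
        refine mul_le_mul_of_nonneg_left ?_ (by positivity)
        exact pow_finrank_mul_integral_integral_integral_segment_homothety_le μ
          (fun z ↦ sq_nonneg _) hgc hUm hU_bdd hU_conv hx₀ hs
    _ = 2 ^ finrank ℝ E * Metric.diam U ^ 2 * ∫ z in U, g z ∂μ := by
        field_simp

end NormedSpace

/-- for `U ⊂ ℝ²` open, bounded, convex, `x₀ ∈ U`, `B ∈ C¹(ℝ²)` and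
`s ∈ (0,1)`: `s² ∫_U |B(s(x−x₀)+x₀) − B_av|² dx ≤ 8 δ² ∫_U |∇B|² dx`. -/
theorem stmt_2 (U : Set (EuclideanSpace ℝ (Fin 2)))
    (hU_open : IsOpen U) (hU_bdd : Bornology.IsBounded U) (hU_conv : Convex ℝ U)
    (x₀ : EuclideanSpace ℝ (Fin 2)) (hx₀ : x₀ ∈ U)
    (B : EuclideanSpace ℝ (Fin 2) → ℝ) (hB : ContDiff ℝ 1 B)
    (s : ℝ) (hs : s ∈ Set.Ioo (0:ℝ) 1) :
    s ^ 2 * ∫ x in U,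
        (B (s • (x - x₀) + x₀) - (volume U).toReal⁻¹ * ∫ y in U, B y) ^ 2
      ≤ 8 * Metric.diam U ^ 2 * ∫ x in U, ‖fderiv ℝ B x‖ ^ 2 := by
  have h := pow_finrank_mul_setIntegral_sq_sub_setAverage_comp_homothety_le volume hU_open
    hU_bdd hU_conv hx₀ hB (Ioo_subset_Ioc_self hs)
  simp only [finrank_euclideanSpace_fin, AffineMap.homothety_apply, vsub_eq_sub, vadd_eq_add,
    setAverage_eq, smul_eq_mul, measureReal_def] at h
  refine h.trans (mul_le_mul_of_nonneg_right ?_ ?_)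
  · exact mul_le_mul_of_nonneg_right (by norm_num) (sq_nonneg _)
  · exact setIntegral_nonneg hU_open.measurableSet fun _ _ ↦ sq_nonneg _
end

section
/- Let U ⊂ ℝ² be open, bounded, convex, x₀ ∈ U, δ = diam(U), and B ∈ C¹(ℝ²). Then ∫_U ∫_U |B(s(x−x₀)+x₀) − B(y)|² dx dy ≤ (8/s²) δ² |U| ∫_U |∇B|² dx for all s ∈ (0,1). -/
/-!
Write `z = s (x - x₀) + x₀`. For `x, y ∈ U` the fundamental theorem of calculus along the segment
from `y` to `z`, followed by Jensen's inequality, gives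
`|B z - B y|² ≤ δ² ∫₀¹ |∇B (y + t (z - y))|² dt`. After exchanging the order of integration it
remains to bound, for each `t`, the double integral over `U × U` of `|∇B|²` at
`y + t (z - y) = (1 - t) y + t s x + const`. By convexity this point stays in `U`, so substituting
in `y` when `t ≤ 1/2`, and in `x` when `t ≥ 1/2`, bounds the inner integral by the Jacobian factor
`(1 - t)⁻²`, resp. `(t s)⁻²`, times `∫_U |∇B|²`. Both factors are at most `(2/s)²`, so the
constant obtained is `4/s² ≤ 8/s²`.
-/

open MeasureTheory Set Module

section Fubini

variable {X Y F : Type*} [MetricSpace X] [ProperSpace X] [MeasurableSpace X] [BorelSpace X]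
  [MetricSpace Y] [ProperSpace Y] [MeasurableSpace Y] [BorelSpace Y]
  [NormedAddCommGroup F] {μ : Measure X} {ν : Measure Y}
  [IsFiniteMeasureOnCompacts μ] [IsFiniteMeasureOnCompacts ν] {s : Set X} {t : Set Y}

theorem Continuous.integrableOn_of_isBounded {f : X → F} (hf : Continuous f)
    (hs : Bornology.IsBounded s) : IntegrableOn f s μ :=
  (hf.continuousOn.integrableOn_compact hs.isCompact_closure).mono_set subset_closure

theorem setIntegral_prod_of_continuous [NormedSpace ℝ F] {f : X × Y → F} (hf : Continuous f)
    (hs : Bornology.IsBounded s) (ht : Bornology.IsBounded t) :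
    ∫ p in s ×ˢ t, f p ∂μ.prod ν = ∫ x in s, ∫ y in t, f (x, y) ∂ν ∂μ :=
  setIntegral_prod f (hf.integrableOn_of_isBounded (hs.prod ht))

theorem setIntegral_setIntegral_swap_of_continuous [NormedSpace ℝ F] {f : X → Y → F}
    (hf : Continuous (Function.uncurry f)) (hs : Bornology.IsBounded s)
    (ht : Bornology.IsBounded t) :
    ∫ x in s, ∫ y in t, f x y ∂ν ∂μ = ∫ y in t, ∫ x in s, f x y ∂μ ∂ν :=
  integral_integral_swap <| by
    rw [Measure.prod_restrict]
    exact hf.integrableOn_of_isBounded (hs.prod ht)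

end Fubini

theorem setIntegral_le_mul_measureReal {α : Type*} [MeasurableSpace α] {μ : Measure α}
    {s : Set α} {f : α → ℝ} {C : ℝ} (hs : μ s < ⊤) (hf0 : ∀ x ∈ s, 0 ≤ f x)
    (hfC : ∀ x ∈ s, f x ≤ C) : ∫ x in s, f x ∂μ ≤ C * μ.real s :=
  (le_abs_self _).trans <| norm_setIntegral_le_of_norm_le_const hs fun x hx => by
    rw [Real.norm_eq_abs, abs_of_nonneg (hf0 x hx)]
    exact hfC x hx

theorem sq_intervalIntegral_le_intervalIntegral_sq {h : ℝ → ℝ}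
    (hh : IntervalIntegrable h volume 0 1)
    (hh2 : IntervalIntegrable (fun t => h t ^ 2) volume 0 1) :
    (∫ t in (0:ℝ)..1, h t) ^ 2 ≤ ∫ t in (0:ℝ)..1, h t ^ 2 := by
  have : IsProbabilityMeasure (volume.restrict (Ioc (0:ℝ) 1)) := ⟨by simp⟩
  simp only [intervalIntegral.integral_of_le zero_le_one]
  exact (Even.convexOn_pow even_two).map_integral_le (continuous_pow 2).continuousOn
    isClosed_univ (.of_forall fun _ => trivial) hh.1 hh2.1

section NormedSpace

variable {E : Type*} [NormedAddCommGroup E] [NormedSpace ℝ E]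

theorem Convex.smul_sub_add_mem {U : Set E} {x₀ x : E} {s : ℝ} (hUc : Convex ℝ U)
    (hx₀ : x₀ ∈ U) (hx : x ∈ U) (hs : s ∈ Icc (0:ℝ) 1) : s • (x - x₀) + x₀ ∈ U := by
  rw [add_comm]
  exact hUc.add_smul_sub_mem hx₀ hx hs

theorem sq_sub_le_norm_sub_sq_mul_integral_norm_fderiv_sq {B : E → ℝ} (hB : ContDiff ℝ 1 B)
    (y z : E) :
    (B z - B y) ^ 2 ≤ ‖z - y‖ ^ 2 * ∫ t in (0:ℝ)..1, ‖fderiv ℝ B (y + t • (z - y))‖ ^ 2 := by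
  have hB' := hB.continuous_fderiv one_ne_zero
  set h : ℝ → ℝ := fun t => fderiv ℝ B (y + t • (z - y)) (z - y)
  have hh : Continuous h := by fun_prop
  have hderiv : ∀ t, HasDerivAt (fun u : ℝ => B (y + u • (z - y))) (h t) t := fun t =>
    (hB.differentiable one_ne_zero _).hasFDerivAt.comp_hasDerivAt t
      (((hasDerivAt_id t).smul_const (z - y)).const_add y |>.congr_deriv (one_smul ℝ _))
  have hftc : ∫ t in (0:ℝ)..1, h t = B z - B y := by
    simpa using intervalIntegral.integral_eq_sub_of_hasDerivAt (fun t _ => hderiv t)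
      (hh.intervalIntegrable 0 1)
  have hh2 : IntervalIntegrable (fun t => h t ^ 2) volume 0 1 := (hh.pow 2).intervalIntegrable 0 1
  calc (B z - B y) ^ 2 = (∫ t in (0:ℝ)..1, h t) ^ 2 := by rw [hftc]
    _ ≤ ∫ t in (0:ℝ)..1, h t ^ 2 :=
      sq_intervalIntegral_le_intervalIntegral_sq (hh.intervalIntegrable 0 1) hh2
    _ ≤ ∫ t in (0:ℝ)..1, ‖z - y‖ ^ 2 * ‖fderiv ℝ B (y + t • (z - y))‖ ^ 2 := by
      refine intervalIntegral.integral_mono_on zero_le_one hh2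
        (Continuous.intervalIntegrable (by fun_prop) 0 1) fun t _ => ?_
      rw [← mul_pow, ← sq_abs, mul_comm]
      gcongr
      exact (fderiv ℝ B _).le_opNorm (z - y)
    _ = ‖z - y‖ ^ 2 * ∫ t in (0:ℝ)..1, ‖fderiv ℝ B (y + t • (z - y))‖ ^ 2 :=
      intervalIntegral.integral_const_mul _ _

end NormedSpace

section AddHaar

variable {E : Type*} [NormedAddCommGroup E] [NormedSpace ℝ E] [FiniteDimensional ℝ E]
  [MeasurableSpace E] [BorelSpace E] {μ : Measure E} [μ.IsAddHaarMeasure]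
  {U : Set E} {x₀ : E} {s : ℝ}

theorem setIntegral_comp_smul_add_le (hU : MeasurableSet U) {φ : E → ℝ} (hφ0 : 0 ≤ φ)
    (hφ : IntegrableOn φ U μ) {c : ℝ} (hc : 0 < c) {a : E}
    (hmaps : MapsTo (fun x => c • x + a) U U) :
    ∫ x in U, φ (c • x + a) ∂μ ≤ (c ^ finrank ℝ E)⁻¹ * ∫ x in U, φ x ∂μ := by
  have hind : Integrable (U.indicator φ) μ := (integrable_indicator_iff hU).2 hφ
  rw [← integral_indicator hU, ← integral_indicator hU]
  calc ∫ x, U.indicator (fun x => φ (c • x + a)) x ∂μ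
      ≤ ∫ x, U.indicator φ (c • x + a) ∂μ := by
        refine integral_mono_of_nonneg (.of_forall (indicator_nonneg fun _ _ => hφ0 _))
          ((hind.comp_add_right a).comp_smul hc.ne') (.of_forall fun x => ?_)
        by_cases hx : x ∈ U
        · simp [hx, hmaps hx]
        · simpa [hx] using indicator_nonneg (fun y _ => hφ0 y) _
    _ = (c ^ finrank ℝ E)⁻¹ * ∫ x, U.indicator φ x ∂μ := by
        rw [Measure.integral_comp_smul_of_nonneg μ (fun y => U.indicator φ (y + a)) c (hR := hc.le),
          integral_add_right_eq_self, smul_eq_mul]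

theorem setIntegral_setIntegral_comp_segment_homothety_le (hU : MeasurableSet U)
    (hUb : Bornology.IsBounded U) (hUc : Convex ℝ U) (hx₀ : x₀ ∈ U) (hs0 : 0 < s) (hs1 : s ≤ 1)
    {φ : E → ℝ} (hφ : Continuous φ) (hφ0 : 0 ≤ φ) {t : ℝ} (ht : t ∈ Icc (0:ℝ) 1) :
    ∫ y in U, ∫ x in U, φ (y + t • (s • (x - x₀) + x₀ - y)) ∂μ ∂μ
      ≤ (2 / s) ^ finrank ℝ E * (∫ x in U, φ x ∂μ) * μ.real U := by
  set n := finrank ℝ E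
  have hUfin : μ U < ⊤ := hUb.measure_lt_top
  have hφU : IntegrableOn φ U μ := hφ.integrableOn_of_isBounded hUb
  have hK : 0 ≤ ∫ x in U, φ x ∂μ := setIntegral_nonneg hU fun x _ => hφ0 x
  have hseg : ∀ x ∈ U, ∀ y ∈ U, y + t • (s • (x - x₀) + x₀ - y) ∈ U := fun x hx y hy =>
    hUc.add_smul_sub_mem hy (hUc.smul_sub_add_mem hx₀ hx ⟨hs0.le, hs1⟩) ht
  have hscale : ∀ {c : ℝ}, s / 2 ≤ c → (c ^ n)⁻¹ ≤ (2 / s) ^ n := fun {c} hc => by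
    have hc0 : 0 < c := (half_pos hs0).trans_le hc
    rw [← inv_pow, ← inv_div]
    exact pow_le_pow_left₀ (inv_nonneg.2 hc0.le) (inv_anti₀ (half_pos hs0) hc) n
  rcases le_total t (1 / 2) with ht2 | ht2
  · rw [setIntegral_setIntegral_swap_of_continuous (by fun_prop) hUb hUb]
    refine setIntegral_le_mul_measureReal hUfin
      (fun x _ => setIntegral_nonneg hU fun y _ => hφ0 _) fun x hx => ?_
    have hmaps : MapsTo (fun y => (1 - t) • y + t • (s • (x - x₀) + x₀)) U U := fun y hy => by
      convert hseg x hx y hy using 1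
      module
    calc ∫ y in U, φ (y + t • (s • (x - x₀) + x₀ - y)) ∂μ
        = ∫ y in U, φ ((1 - t) • y + t • (s • (x - x₀) + x₀)) ∂μ := by
          congr! 3 with y
          module
      _ ≤ ((1 - t) ^ n)⁻¹ * ∫ y in U, φ y ∂μ :=
          setIntegral_comp_smul_add_le hU hφ0 hφU (by linarith) hmaps
      _ ≤ (2 / s) ^ n * ∫ y in U, φ y ∂μ := by gcongr; exact hscale (by linarith)
  · refine setIntegral_le_mul_measureReal hUfin
      (fun y _ => setIntegral_nonneg hU fun x _ => hφ0 _) fun y hy => ?_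
    have hmaps : MapsTo (fun x => (t * s) • x + (y + t • ((1 - s) • x₀ - y))) U U :=
      fun x hx => by
        convert hseg x hx y hy using 1
        module
    calc ∫ x in U, φ (y + t • (s • (x - x₀) + x₀ - y)) ∂μ
        = ∫ x in U, φ ((t * s) • x + (y + t • ((1 - s) • x₀ - y))) ∂μ := by
          congr! 3 with x
          module
      _ ≤ ((t * s) ^ n)⁻¹ * ∫ x in U, φ x ∂μ :=
          setIntegral_comp_smul_add_le hU hφ0 hφU (by nlinarith) hmaps
      _ ≤ (2 / s) ^ n * ∫ x in U, φ x ∂μ := by gcongr; exact hscale (by nlinarith)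

theorem setIntegral_setIntegral_sq_sub_comp_homothety_le (hU : MeasurableSet U)
    (hUb : Bornology.IsBounded U) (hUc : Convex ℝ U) (hx₀ : x₀ ∈ U) {B : E → ℝ}
    (hB : ContDiff ℝ 1 B) (hs0 : 0 < s) (hs1 : s ≤ 1) :
    ∫ y in U, ∫ x in U, (B (s • (x - x₀) + x₀) - B y) ^ 2 ∂μ ∂μ
      ≤ (2 / s) ^ finrank ℝ E * Metric.diam U ^ 2 * μ.real U *
          ∫ x in U, ‖fderiv ℝ B x‖ ^ 2 ∂μ := by
  have hB' := hB.continuous_fderiv one_ne_zero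
  set φ : E → ℝ := fun w => ‖fderiv ℝ B w‖ ^ 2
  have hUU : Bornology.IsBounded (U ×ˢ U) := hUb.prod hUb
  calc ∫ y in U, ∫ x in U, (B (s • (x - x₀) + x₀) - B y) ^ 2 ∂μ ∂μ
      = ∫ p in U ×ˢ U, (B (s • (p.2 - x₀) + x₀) - B p.1) ^ 2 ∂μ.prod μ :=
        (setIntegral_prod_of_continuous (f := fun p => (B (s • (p.2 - x₀) + x₀) - B p.1) ^ 2)
          (by fun_prop) hUb hUb).symm
    _ ≤ ∫ p in U ×ˢ U, Metric.diam U ^ 2 *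
          (∫ t in (0:ℝ)..1, φ (p.1 + t • (s • (p.2 - x₀) + x₀ - p.1))) ∂μ.prod μ := by
        refine setIntegral_mono_on (Continuous.integrableOn_of_isBounded (by fun_prop) hUU)
          (Continuous.integrableOn_of_isBounded (by fun_prop) hUU) (hU.prod hU)
          fun p ⟨hy, hx⟩ => (sq_sub_le_norm_sub_sq_mul_integral_norm_fderiv_sq hB _ _).trans ?_
        gcongr
        · exact intervalIntegral.integral_nonneg zero_le_one fun t _ => sq_nonneg _
        · rw [← dist_eq_norm]
          exact Metric.dist_le_diam_of_mem hUb (hUc.smul_sub_add_mem hx₀ hx ⟨hs0.le, hs1⟩) hy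
    _ = Metric.diam U ^ 2 * ∫ t in Ioc (0:ℝ) 1,
          ∫ p in U ×ˢ U, φ (p.1 + t • (s • (p.2 - x₀) + x₀ - p.1)) ∂μ.prod μ := by
        simp_rw [integral_const_mul, intervalIntegral.integral_of_le zero_le_one]
        rw [setIntegral_setIntegral_swap_of_continuous (by fun_prop) hUU (Metric.isBounded_Ioc 0 1)]
    _ ≤ Metric.diam U ^ 2 * ((2 / s) ^ finrank ℝ E * (∫ x in U, φ x ∂μ) * μ.real U) := by
        gcongr
        calc _ ≤ (2 / s) ^ finrank ℝ E * (∫ x in U, φ x ∂μ) * μ.real U *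
                  volume.real (Ioc (0:ℝ) 1) :=
              setIntegral_le_mul_measureReal (by simp)
                (fun t _ => setIntegral_nonneg (hU.prod hU) fun p _ => sq_nonneg _)
                fun t ht => by
                  rw [setIntegral_prod_of_continuous (by fun_prop) hUb hUb]
                  exact setIntegral_setIntegral_comp_segment_homothety_le hU hUb hUc hx₀ hs0 hs1
                    (φ := φ) (by fun_prop) (fun _ => sq_nonneg _) (Ioc_subset_Icc_self ht)
          _ = _ := by simp
    _ = _ := by ring

end AddHaar

/-- for `U ⊂ ℝ²` open, bounded, convex, `x₀ ∈ U`, `δ = diam U`,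
`B ∈ C¹(ℝ²)` and `s ∈ (0,1)`:
`∫_U ∫_U |B(s(x−x₀)+x₀) − B(y)|² dx dy ≤ (8/s²) δ² |U| ∫_U |∇B|² dx`. -/
theorem stmt_4 (U : Set (EuclideanSpace ℝ (Fin 2)))
    (hU_open : IsOpen U) (hU_bdd : Bornology.IsBounded U) (hU_conv : Convex ℝ U)
    (x₀ : EuclideanSpace ℝ (Fin 2)) (hx₀ : x₀ ∈ U)
    (B : EuclideanSpace ℝ (Fin 2) → ℝ) (hB : ContDiff ℝ 1 B)
    (s : ℝ) (hs : s ∈ Set.Ioo (0:ℝ) 1) :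
    ∫ y in U, ∫ x in U, (B (s • (x - x₀) + x₀) - B y) ^ 2
      ≤ 8 / s ^ 2 * Metric.diam U ^ 2 * (volume U).toReal *
          ∫ x in U, ‖fderiv ℝ B x‖ ^ 2 := by
  have hK : 0 ≤ ∫ x in U, ‖fderiv ℝ B x‖ ^ 2 := integral_nonneg fun _ => sq_nonneg _
  calc _ ≤ (2 / s) ^ 2 * Metric.diam U ^ 2 * volume.real U * ∫ x in U, ‖fderiv ℝ B x‖ ^ 2 := by
        simpa only [finrank_euclideanSpace_fin] using
          setIntegral_setIntegral_sq_sub_comp_homothety_le (μ := volume) hU_open.measurableSet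
            hU_bdd hU_conv hx₀ hB hs.1 hs.2.le
    _ ≤ _ := by
        rw [div_pow, measureReal_def]
        gcongr
        norm_num
end
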